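/- Let M(φ, π*) be a Mallows model on permutations of [n] with 0 < φ < 1, let x_1, …, x_ℓ be ℓ distinct elements of [n] and p_1, …, p_ℓ be ℓ distinct positions in [n]. Then the probability under M(φ, π*) that a sampled permutation π places x_j in position p_j for all 1 ≤ j ≤ ℓ is at most ∏_{j=0}^{ℓ−1} 1/(φ^j + φ^{j+1} + ⋯ + φ^{n−1}) = (1−φ)^ℓ / ((1−φ^n)(φ−φ^n)⋯(φ^{ℓ−1}−φ^n)). -/

import Mathlib

/-
Write `Z m = ∑_{τ ∈ S_m} φ ^ inv τ`; since `dKT π* σ = inv (σ π*⁻¹)`, the Mallows probability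
of an event is its inversion weight divided by `Z n`. Inserting the largest element into a
permutation of `[m]` at position `s` creates exactly `m - s` new inversions, so
`Z (m + 1) = [m + 1] Z m` with `[k] = 1 + φ + ⋯ + φ ^ (k - 1)`. A permutation placing each `x j`
at `p j` is determined by how it maps the `n - ℓ` other elements onto the `n - ℓ` free
positions, and the permutation of `[n - ℓ]` so induced has no more inversions. Hence the event
has weight at most `Z (n - ℓ)`, and probability at most
`Z (n - ℓ) / Z n = ∏_{j < ℓ} [n - j]⁻¹ ≤ ∏_{j < ℓ} (φ ^ j + ⋯ + φ ^ (n - 1))⁻¹`.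
-/

open Finset

/-- Number of inversions of a permutation of `Fin n`. -/
def numInv {n : ℕ} (τ : Equiv.Perm (Fin n)) : ℕ :=
  (Finset.univ.filter fun p : Fin n × Fin n => p.1 < p.2 ∧ τ p.2 < τ p.1).card

/-- Kendall-Tau distance between two permutations of `Fin n`. -/
def dKT {n : ℕ} (π π' : Equiv.Perm (Fin n)) : ℕ :=
  (Finset.univ.filter fun p : Fin n × Fin n =>
    p.1 < p.2 ∧ ¬((π p.1 < π p.2) ↔ (π' p.1 < π' p.2))).card

/-- The Mallows model probability of `σ`, with scaling parameter `φ` and center `c`. -/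
noncomputable def mallows {n : ℕ} (φ : ℝ) (c : Equiv.Perm (Fin n)) (σ : Equiv.Perm (Fin n)) : ℝ :=
  φ ^ dKT c σ / ∑ τ : Equiv.Perm (Fin n), φ ^ dKT c τ

/-- Total variation distance. -/
noncomputable def dTV {n : ℕ} (P Q : Equiv.Perm (Fin n) → ℝ) : ℝ :=
  (∑ σ : Equiv.Perm (Fin n), |P σ - Q σ|) / 2

open Equiv

lemma dKT_eq_card {n : ℕ} (π σ : Perm (Fin n)) :
    dKT π σ = #{q : Fin n × Fin n | π q.1 < π q.2 ∧ σ q.2 < σ q.1} := by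
  refine card_nbij' (fun q => if π q.1 < π q.2 then q else q.swap)
    (fun q => if q.1 < q.2 then q else q.swap) ?_ ?_ ?_ ?_ <;>
  · rintro ⟨a, b⟩
    simp only [coe_filter, mem_univ, true_and, Prod.swap_prod_mk]
    grind [π.injective.eq_iff, σ.injective.eq_iff]

lemma numInv_mul_inv {n : ℕ} (π σ : Perm (Fin n)) :
    numInv (σ * π⁻¹) = #{q : Fin n × Fin n | π q.1 < π q.2 ∧ σ q.2 < σ q.1} :=
  card_equiv (π.prodCongr π).symm fun q => by
    simp only [mem_filter]
    simp [Perm.inv_def]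

lemma dKT_eq_numInv {n : ℕ} (π σ : Perm (Fin n)) : dKT π σ = numInv (σ * π⁻¹) :=
  (dKT_eq_card π σ).trans (numInv_mul_inv π σ).symm

lemma sum_dKT_eq_sum_numInv {M : Type*} [AddCommMonoid M] {n : ℕ} (π : Perm (Fin n))
    (f : Perm (Fin n) → ℕ → M) :
    ∑ σ, f σ (dKT π σ) = ∑ τ, f (τ * π) (numInv τ) := by
  simp only [dKT_eq_numInv]
  exact (Fintype.sum_equiv (Equiv.mulRight π) _ _ fun τ => by simp).symm

lemma sum_ite_mallows {n : ℕ} (φ : ℝ) (π : Perm (Fin n)) (P : Perm (Fin n) → Prop)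
    [DecidablePred P] :
    ∑ σ, (if P σ then mallows φ π σ else 0)
      = (∑ τ, if P (τ * π) then φ ^ numInv τ else 0) / ∑ τ : Perm (Fin n), φ ^ numInv τ := by
  have hterm (σ : Perm (Fin n)) : (if P σ then mallows φ π σ else 0)
      = (if P σ then φ ^ dKT π σ else 0) / ∑ τ, φ ^ dKT π τ := by
    split_ifs <;> simp [mallows]
  rw [sum_congr rfl fun σ _ => hterm σ, ← sum_div,
    sum_dKT_eq_sum_numInv π fun σ d => if P σ then φ ^ d else 0,
    sum_dKT_eq_sum_numInv π fun _ d => φ ^ d]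

section Insertion

variable {n : ℕ}

def insertLast (s : Fin (n + 1)) (τ : Perm (Fin n)) : Perm (Fin (n + 1)) :=
  (finSuccEquivLast.trans τ.optionCongr).trans (finSuccEquiv' s).symm

@[simp]
lemma insertLast_last (s : Fin (n + 1)) (τ : Perm (Fin n)) :
    insertLast s τ (Fin.last n) = s := by
  simp [insertLast]

@[simp]
lemma insertLast_castSucc (s : Fin (n + 1)) (τ : Perm (Fin n)) (i : Fin n) :
    insertLast s τ i.castSucc = s.succAbove (τ i) := by
  simp [insertLast, finSuccEquiv'_symm_some]

lemma insertLast_bijective :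
    Function.Bijective fun sτ : Fin (n + 1) × Perm (Fin n) => insertLast sτ.1 sτ.2 := by
  refine (Fintype.bijective_iff_injective_and_card _).2 ⟨?_, ?_⟩
  · rintro ⟨s, τ⟩ ⟨s', τ'⟩ h
    obtain rfl : s = s' := by simpa using DFunLike.congr_fun h (Fin.last n)
    refine Prod.ext rfl (Equiv.ext fun i => Fin.succAbove_right_injective (p := s) ?_)
    simpa using DFunLike.congr_fun h i.castSucc
  · simp [Fintype.card_perm, Nat.factorial_succ]

lemma card_lt_succAbove (s : Fin (n + 1)) : #{v : Fin n | s < s.succAbove v} = n - s := by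
  have h := card_filter_add_card_filter_not (s := univ) fun v : Fin n => (v : ℕ) < s
  rw [Fin.card_filter_val_lt, card_univ, Fintype.card_fin] at h
  have hset : #{v : Fin n | s < s.succAbove v} = #{v : Fin n | ¬(v : ℕ) < s} := by
    congr 1
    ext v
    simp [Fin.lt_succAbove_iff_le_castSucc, Fin.le_def]
  omega

lemma numInv_eq_sum (τ : Perm (Fin n)) :
    numInv τ = ∑ a, ∑ b, if a < b ∧ τ b < τ a then 1 else 0 := by
  rw [numInv, card_filter, Fintype.sum_prod_type]

lemma numInv_insertLast (s : Fin (n + 1)) (τ : Perm (Fin n)) :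
    numInv (insertLast s τ) = (n - s) + numInv τ := by
  have hrow (i : Fin n) :
      (∑ b, if i.castSucc < b ∧ insertLast s τ b < insertLast s τ i.castSucc then 1 else 0)
        = (∑ j, if i < j ∧ τ j < τ i then 1 else 0) + if s < s.succAbove (τ i) then 1 else 0 := by
    rw [Fin.sum_univ_castSucc]
    simp [Fin.castSucc_lt_last, Fin.succAbove_lt_succAbove_iff]
  have hlast :
      (∑ b, if Fin.last n < b ∧ insertLast s τ b < insertLast s τ (Fin.last n) then 1 else 0)
        = 0 :=
    sum_eq_zero fun b _ => if_neg fun h => (Fin.le_last b).not_gt h.1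
  have hnew : (∑ i, if s < s.succAbove (τ i) then 1 else 0) = n - s := by
    rw [Equiv.sum_comp τ fun v => if s < s.succAbove v then 1 else 0, ← card_filter,
      card_lt_succAbove]
  rw [numInv_eq_sum, numInv_eq_sum, Fin.sum_univ_castSucc, hlast]
  simp only [hrow, sum_add_distrib, hnew]
  omega

lemma sum_pow_numInv_succ {R : Type*} [CommSemiring R] (φ : R) :
    ∑ σ : Perm (Fin (n + 1)), φ ^ numInv σ
      = (∑ t ∈ range (n + 1), φ ^ t) * ∑ τ : Perm (Fin n), φ ^ numInv τ := by
  rw [← Fintype.sum_bijective _ insertLast_bijective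
    (fun sτ => φ ^ numInv (insertLast sτ.1 sτ.2)) _ fun _ => rfl, Fintype.sum_prod_type]
  simp only [numInv_insertLast, pow_add, ← mul_sum, ← sum_mul]
  congr 1
  rw [Fin.sum_univ_eq_sum_range (fun i => φ ^ (n - i))]
  simpa using sum_range_reflect (φ ^ ·) (n + 1)

end Insertion

lemma prod_mul_sum_pow_numInv {R : Type*} [CommSemiring R] (φ : R) {n ℓ : ℕ} (hℓ : ℓ ≤ n) :
    (∏ j ∈ range ℓ, ∑ t ∈ range (n - j), φ ^ t) * ∑ τ : Perm (Fin (n - ℓ)), φ ^ numInv τ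
      = ∑ σ : Perm (Fin n), φ ^ numInv σ := by
  induction ℓ with
  | zero => simp
  | succ ℓ ih =>
    obtain ⟨m, hm⟩ : ∃ m, n - ℓ = m + 1 := ⟨n - ℓ - 1, by omega⟩
    have hm' : n - (ℓ + 1) = m := by omega
    rw [← ih (by omega), prod_range_succ, hm, hm', sum_pow_numInv_succ, mul_assoc]

section InducedPerm

variable {n k : ℕ} {U F : Finset (Fin n)} (hU : #U = k) (hF : #F = k)

def inducedPerm (σ : Perm (Fin n)) (hσ : ∀ a, a ∈ U ↔ σ a ∈ F) : Perm (Fin k) :=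
  ((U.orderIsoOfFin hU).toEquiv.trans (σ.subtypeEquiv hσ)).trans (F.orderIsoOfFin hF).toEquiv.symm

lemma orderEmbOfFin_inducedPerm (σ : Perm (Fin n)) (hσ : ∀ a, a ∈ U ↔ σ a ∈ F) (i : Fin k) :
    F.orderEmbOfFin hF (inducedPerm hU hF σ hσ i) = σ (U.orderEmbOfFin hU i) := by
  simp [inducedPerm, ← coe_orderIsoOfFin_apply]

lemma numInv_inducedPerm_le (σ : Perm (Fin n)) (hσ : ∀ a, a ∈ U ↔ σ a ∈ F) :
    numInv (inducedPerm hU hF σ hσ) ≤ numInv σ := by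
  refine card_le_card_of_injOn (Prod.map (U.orderEmbOfFin hU) (U.orderEmbOfFin hU))
    (fun ⟨a, b⟩ hab => ?_)
    ((U.orderEmbOfFin hU).injective.prodMap (U.orderEmbOfFin hU).injective).injOn
  simp only [mem_coe, mem_filter, mem_univ, true_and, Prod.map_apply] at hab ⊢
  rw [← orderEmbOfFin_inducedPerm hU hF σ hσ, ← orderEmbOfFin_inducedPerm hU hF σ hσ]
  exact ⟨(U.orderEmbOfFin hU).strictMono hab.1, (F.orderEmbOfFin hF).strictMono hab.2⟩

lemma eq_of_inducedPerm_eq {σ σ' : Perm (Fin n)} (hσ : ∀ a, a ∈ U ↔ σ a ∈ F)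
    (hσ' : ∀ a, a ∈ U ↔ σ' a ∈ F) (hout : ∀ a ∉ U, σ a = σ' a)
    (h : inducedPerm hU hF σ hσ = inducedPerm hU hF σ' hσ') : σ = σ' := by
  ext1 a
  by_cases ha : a ∈ U
  · obtain ⟨i, rfl⟩ : a ∈ Set.range (U.orderEmbOfFin hU) := by simpa using ha
    rw [← orderEmbOfFin_inducedPerm hU hF σ hσ, ← orderEmbOfFin_inducedPerm hU hF σ' hσ', h]
  · exact hout a ha

end InducedPerm

lemma sum_le_sum_of_injective {ι κ M : Type*} [Fintype ι] [Fintype κ] [AddCommMonoid M]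
    [PartialOrder M] [IsOrderedAddMonoid M] {f : ι → M} {g : κ → M} (e : ι → κ)
    (he : Function.Injective e) (hfg : ∀ i, f i ≤ g (e i)) (hg : ∀ j, 0 ≤ g j) :
    ∑ i, f i ≤ ∑ j, g j := by
  classical
  calc ∑ i, f i ≤ ∑ i, g (e i) := sum_le_sum fun i _ => hfg i
    _ = ∑ j ∈ univ.image e, g j := (sum_image he.injOn).symm
    _ ≤ ∑ j, g j := sum_le_univ_sum_of_nonneg hg

section Pinned

variable {n ℓ : ℕ} {x p : Fin ℓ → Fin n}

lemma card_compl_image (hx : Function.Injective x) : #(univ.image x)ᶜ = n - ℓ := by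
  rw [card_compl, card_image_of_injective _ hx]
  simp

lemma mem_compl_image_iff_apply_mem {σ : Perm (Fin n)} (hσ : ∀ j, σ (x j) = p j)
    (a : Fin n) :
    a ∈ (univ.image x)ᶜ ↔ σ a ∈ (univ.image p)ᶜ := by
  simp [← hσ]

lemma sum_pow_numInv_pinned_le {R : Type*} [CommSemiring R] [PartialOrder R] [IsOrderedRing R]
    {φ : R} (h0 : 0 ≤ φ) (h1 : φ ≤ 1) (hx : Function.Injective x) (hp : Function.Injective p) :
    ∑ σ : Perm (Fin n), (if ∀ j, σ (x j) = p j then φ ^ numInv σ else 0)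
      ≤ ∑ τ : Perm (Fin (n - ℓ)), φ ^ numInv τ := by
  let e (σ : {σ : Perm (Fin n) // ∀ j, σ (x j) = p j}) : Perm (Fin (n - ℓ)) :=
    inducedPerm (card_compl_image hx) (card_compl_image hp) σ.1
      (mem_compl_image_iff_apply_mem σ.2)
  have he : Function.Injective e := by
    refine fun σ σ' h => Subtype.ext (eq_of_inducedPerm_eq _ _ _ _ (fun a ha => ?_) h)
    obtain ⟨j, -, rfl⟩ := mem_image.1 (notMem_compl.1 ha)
    rw [σ.2 j, σ'.2 j]
  rw [← sum_filter, sum_subtype _ fun σ => mem_filter.trans (and_iff_right (mem_univ σ))]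
  exact sum_le_sum_of_injective e he
    (fun σ => pow_le_pow_of_le_one h0 h1 (numInv_inducedPerm_le _ _ _ _))
    fun τ => pow_nonneg h0 _

end Pinned

lemma sum_Ico_pow_le_sum_range_pow {R : Type*} [CommSemiring R] [PartialOrder R]
    [IsOrderedRing R] {φ : R} (h0 : 0 ≤ φ) (h1 : φ ≤ 1) (j n : ℕ) :
    ∑ t ∈ Ico j n, φ ^ t ≤ ∑ t ∈ range (n - j), φ ^ t := by
  rw [sum_Ico_eq_sum_range]
  exact sum_le_sum fun t _ => pow_le_pow_of_le_one h0 h1 (Nat.le_add_left t j)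

lemma prod_inv_sum_Ico_pow {φ : ℝ} (hφ : φ ≠ 1) {ℓ n : ℕ} (hℓ : ℓ ≤ n) :
    ∏ j ∈ range ℓ, (∑ t ∈ Ico j n, φ ^ t)⁻¹ = (1 - φ) ^ ℓ / ∏ j ∈ range ℓ, (φ ^ j - φ ^ n) := by
  have hterm (j) (hj : j ∈ range ℓ) :
      (∑ t ∈ Ico j n, φ ^ t)⁻¹ = (1 - φ) / (φ ^ j - φ ^ n) := by
    rw [geom_sum_Ico hφ ((mem_range.1 hj).le.trans hℓ), inv_div, ← neg_div_neg_eq, neg_sub,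
      neg_sub]
  rw [prod_congr rfl hterm, prod_div_distrib, prod_const, card_range]

open scoped Classical in
/-- **Local query upper bound (from Theorem 6.2 of Liu–Moitra).** For a Mallows model
`M(φ, π*)` with `0 < φ < 1`, distinct elements `x_1, …, x_ℓ` and distinct positions
`p_1, …, p_ℓ`, the probability that a sample places `x_j` in position `p_j` for all `j`
is at most `∏_{j=0}^{ℓ-1} 1/(φ^j + ⋯ + φ^{n-1})`, which equals
`(1-φ)^ℓ / ((1-φ^n)(φ-φ^n)⋯(φ^{ℓ-1}-φ^n))`. -/
theorem placement_probability_bound (n ℓ : ℕ) (φ : ℝ) (hφ0 : 0 < φ) (hφ1 : φ < 1)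
    (πstar : Equiv.Perm (Fin n)) (x p : Fin ℓ → Fin n)
    (hx : Function.Injective x) (hp : Function.Injective p) :
    (∑ σ : Equiv.Perm (Fin n), if ∀ j, σ (x j) = p j then mallows φ πstar σ else 0)
        ≤ ∏ j ∈ Finset.range ℓ, (∑ t ∈ Finset.Ico j n, φ ^ t)⁻¹ ∧
    (∏ j ∈ Finset.range ℓ, (∑ t ∈ Finset.Ico j n, φ ^ t)⁻¹)
        = (1 - φ) ^ ℓ / ∏ j ∈ Finset.range ℓ, (φ ^ j - φ ^ n) := by
  have hℓn : ℓ ≤ n := by simpa using Fintype.card_le_of_injective x hx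
  refine ⟨?_, prod_inv_sum_Ico_pow hφ1.ne hℓn⟩
  set Q := ∏ j ∈ range ℓ, ∑ t ∈ range (n - j), φ ^ t
  set Zfree := ∑ τ : Perm (Fin (n - ℓ)), φ ^ numInv τ
  have hS (j) (hj : j ∈ range ℓ) : 0 < ∑ t ∈ Ico j n, φ ^ t :=
    sum_pos (fun t _ => pow_pos hφ0 t) (nonempty_Ico.2 ((mem_range.1 hj).trans_le hℓn))
  have hSQ : ∏ j ∈ range ℓ, ∑ t ∈ Ico j n, φ ^ t ≤ Q :=
    prod_le_prod (fun j hj => (hS j hj).le) fun j _ =>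
      sum_Ico_pow_le_sum_range_pow hφ0.le hφ1.le j n
  have hQ : 0 < Q := (prod_pos hS).trans_le hSQ
  have hZ : 0 < Zfree := sum_pos (fun τ _ => pow_pos hφ0 _) univ_nonempty
  rw [sum_ite_mallows, ← prod_mul_sum_pow_numInv φ hℓn, prod_inv_distrib]
  calc _ ≤ Zfree / (Q * Zfree) :=
        div_le_div_of_nonneg_right
          (sum_pow_numInv_pinned_le hφ0.le hφ1.le (πstar.injective.comp hx) hp) (mul_pos hQ hZ).le
    _ = Q⁻¹ := by field_simp
    _ ≤ _ := inv_anti₀ (prod_pos hS) hSQ
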